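/- Let ρ be any ranking function defined on all nonempty subsets of a set X of N objects. Then there exist preference functions U_k : X × X^k → ℝ for 0 ≤ k ≤ N−1 such that for every nonempty subset C ⊆ X, sorting the elements x ∈ C in decreasing order of U(x, C∖{x}) = Σ_k (average of U_k(x, C') over subsets C' ⊆ C∖{x} of size k) reproduces exactly the ranking ρ(C). That is, the FETA decomposition of order N−1 can represent every ranking function on N objects. -/

import Mathlib

/-!
Only the order induced by `U` matters, so it suffices to make `U(x, C ∖ {x})` equal to a
prescribed score, e.g. the number of elements that `ρ(C)` ranks below `x`. This is possible
for every score `S`: the context `C ∖ {x}` is the only context of its own size `|C| - 1 < N`,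
and enters `U(x, C ∖ {x})` with weight `1`, so defining `U_k(x, D)` by recursion on `k` as
`S(x, D ∪ {x})` minus the lower-order terms makes the sum come out to exactly `S(x, C)`.
-/

open Finset

section

variable {X : Type*}

/-- The utility `U(x, D)` of the FETA decomposition `Uk` of order `N - 1`. -/
noncomputable def fetaScore (N : ℕ) (Uk : ℕ → X → Finset X → ℝ) (x : X) (D : Finset X) : ℝ :=
  ∑ k ∈ range N, (1 / (D.card.choose k : ℝ)) * ∑ D' ∈ powersetCard k D, Uk k x D'

lemma fetaScore_eq_sum_range_card_succ {N : ℕ} (Uk : ℕ → X → Finset X → ℝ) (x : X)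
    {D : Finset X} (hD : D.card < N) :
    fetaScore N Uk x D =
      ∑ k ∈ range (D.card + 1), (1 / (D.card.choose k : ℝ)) *
        ∑ D' ∈ powersetCard k D, Uk k x D' := by
  refine (sum_subset (range_subset_range.mpr hD) fun k _ hk => ?_).symm
  rw [powersetCard_eq_empty.mpr (by simpa using hk), sum_empty, mul_zero]

section Inversion

variable [DecidableEq X]

/-- Only the values with `D.card = k` are ever used, so `k.choose j` stands for
`D.card.choose j`. -/
noncomputable def fetaUk (S : X → Finset X → ℝ) : ℕ → X → Finset X → ℝ
  | k, x, D => S x (insert x D) - ∑ j ∈ (range k).attach,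
      (1 / (k.choose j : ℝ)) * ∑ D' ∈ powersetCard j D, fetaUk S j x D'
decreasing_by exact mem_range.mp j.2

lemma fetaUk_eq (S : X → Finset X → ℝ) (k : ℕ) (x : X) (D : Finset X) :
    fetaUk S k x D = S x (insert x D) - ∑ j ∈ range k,
      (1 / (k.choose j : ℝ)) * ∑ D' ∈ powersetCard j D, fetaUk S j x D' := by
  rw [fetaUk, sum_attach (range k)
    fun j => (1 / (k.choose j : ℝ)) * ∑ D' ∈ powersetCard j D, fetaUk S j x D']

theorem fetaScore_fetaUk {N : ℕ} (S : X → Finset X → ℝ) (x : X) {D : Finset X}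
    (hD : D.card < N) : fetaScore N (fetaUk S) x D = S x (insert x D) := by
  rw [fetaScore_eq_sum_range_card_succ _ _ hD, sum_range_succ, powersetCard_self,
    sum_singleton, Nat.choose_self, fetaUk_eq]
  push_cast
  ring

end Inversion

section StrictOrder

variable {r : X → X → Prop} [DecidableRel r] {s : Finset X}

lemma card_filter_lt_card_filter_of_rel (hirr : ∀ x ∈ s, ¬ r x x)
    (htrans : ∀ x y z, x ∈ s → y ∈ s → z ∈ s → r x y → r y z → r x z)
    {a b : X} (ha : a ∈ s) (hb : b ∈ s) (hab : r a b) :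
    #{z ∈ s | r b z} < #{z ∈ s | r a z} := by
  refine card_lt_card ⟨fun z hz => ?_, fun hsub => ?_⟩
  · rw [mem_filter] at hz ⊢
    exact ⟨hz.1, htrans a b z ha hb hz.1 hab hz.2⟩
  · exact hirr b hb (mem_filter.mp (hsub (mem_filter.mpr ⟨hb, hab⟩))).2

lemma rel_iff_card_filter_lt (hirr : ∀ x ∈ s, ¬ r x x)
    (htrans : ∀ x y z, x ∈ s → y ∈ s → z ∈ s → r x y → r y z → r x z)
    (htotal : ∀ x y, x ∈ s → y ∈ s → x ≠ y → r x y ∨ r y x)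
    {a b : X} (ha : a ∈ s) (hb : b ∈ s) (hab : a ≠ b) :
    r a b ↔ #{z ∈ s | r b z} < #{z ∈ s | r a z} := by
  refine ⟨card_filter_lt_card_filter_of_rel hirr htrans ha hb, fun hlt => ?_⟩
  refine (htotal a b ha hb hab).resolve_right fun hba => ?_
  exact lt_asymm hlt (card_filter_lt_card_filter_of_rel hirr htrans hb ha hba)

end StrictOrder

end

/-- Proposition 1: every ranking function `prec` on the nonempty subsets of an `N`-element
set can be represented by a FETA decomposition of order `N - 1`: there are context
predicates `Uk k : X → Finset X → ℝ` (contexts of size `k`, symmetric since they are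
functions of sets) such that sorting each query `C` by
`U(x, C∖{x}) = ∑_{k<N} (1/C(|C|−1,k)) ∑_{C' ⊆ C∖{x}, |C'|=k} Uk k x C'` reproduces `prec C`. -/
theorem feta_order_N_minus_one_universal {X : Type*} [Fintype X] [DecidableEq X]
    (N : ℕ) (hN : Fintype.card X = N)
    (prec : Finset X → X → X → Prop)
    (hirr : ∀ (C : Finset X) (x : X), x ∈ C → ¬ prec C x x)
    (htrans : ∀ (C : Finset X) (x y z : X), x ∈ C → y ∈ C → z ∈ C →
      prec C x y → prec C y z → prec C x z)
    (htotal : ∀ (C : Finset X) (x y : X), x ∈ C → y ∈ C → x ≠ y →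
      prec C x y ∨ prec C y x) :
    ∃ Uk : ℕ → X → Finset X → ℝ,
      ∀ (C : Finset X) (x y : X), x ∈ C → y ∈ C → x ≠ y →
        (prec C x y ↔
          (∑ k ∈ Finset.range N, (1 / (Nat.choose (C.card - 1) k : ℝ)) *
              ∑ D ∈ Finset.powersetCard k (C.erase x), Uk k x D) >
          (∑ k ∈ Finset.range N, (1 / (Nat.choose (C.card - 1) k : ℝ)) *
              ∑ D ∈ Finset.powersetCard k (C.erase y), Uk k y D)) := by
  classical
  refine ⟨fetaUk fun x C => #{y ∈ C | prec C x y}, fun C x y hx hy hxy => ?_⟩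
  have hscore : ∀ z ∈ C, fetaScore N (fetaUk fun x C => #{y ∈ C | prec C x y}) z (C.erase z)
      = #{y ∈ C | prec C z y} := fun z hz => by
    have hcard : (C.erase z).card < N :=
      (card_erase_lt_of_mem hz).trans_le (hN ▸ card_le_univ C)
    rw [fetaScore_fetaUk _ _ hcard, insert_erase hz]
  have h := hscore x hx
  have h' := hscore y hy
  simp only [fetaScore, card_erase_of_mem hx, card_erase_of_mem hy] at h h'
  rw [gt_iff_lt, h, h', Nat.cast_lt]
  exact rel_iff_card_filter_lt (hirr C) (htrans C) (htotal C) hx hy hxy
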